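/- arXiv:1912.10194 — 2 statements merged into one kernel-verified Lean document; each statement's English description precedes it below -/
import Mathlib

section
/- Let p_j ∈ ℝ³ be points on a sphere of radius r centered at c, with outward unit normals n_j = (p_j - c)/r, let p_i be another point on the sphere with normal n_i, and let ω_j ≥ 0 with Σ ω_j > 0. With μ chosen by Equation (7), i.e., μ = (Σ_j ω_j n_iᵀ(p_i - p_j)) / (Σ_j ω_j (n_iᵀn_j)(n_jᵀ(p_j - p_i))) (assuming the denominator is nonzero), the gradient of F(p) = (1/2)Σ ω_j‖p-p_j‖² + (μ/2)Σ ω_j((p-p_j)·n_j)² at p = p_i has zero component along n_i. -/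
open scoped RealInnerProductSpace

theorem stmt13 {ι : Type*} [Fintype ι] (r : ℝ) (hr : 0 < r)
    (c pi : EuclideanSpace ℝ (Fin 3)) (pj : ι → EuclideanSpace ℝ (Fin 3))
    (hpi : ‖pi - c‖ = r) (hpj : ∀ j, ‖pj j - c‖ = r)
    (ni : EuclideanSpace ℝ (Fin 3)) (nj : ι → EuclideanSpace ℝ (Fin 3))
    (hni : ni = r⁻¹ • (pi - c)) (hnj : ∀ j, nj j = r⁻¹ • (pj j - c))
    (ω : ι → ℝ) (hω : ∀ j, 0 ≤ ω j) (hωs : 0 < ∑ j, ω j)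
    (hden : (∑ j, ω j * (⟪ni, nj j⟫ * ⟪nj j, pj j - pi⟫)) ≠ 0) :
    (∑ j, ω j * ⟪ni, pi - pj j⟫)
      + ((∑ j, ω j * ⟪ni, pi - pj j⟫) /
          (∑ j, ω j * (⟪ni, nj j⟫ * ⟪nj j, pj j - pi⟫)))
        * ∑ j, ω j * (⟪ni, nj j⟫ * ⟪nj j, pi - pj j⟫) = 0 := by
  have h : (∑ j, ω j * (⟪ni, nj j⟫ * ⟪nj j, pi - pj j⟫))
      = -(∑ j, ω j * (⟪ni, nj j⟫ * ⟪nj j, pj j - pi⟫)) := by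
    rw [← Finset.sum_neg_distrib]
    refine Finset.sum_congr rfl fun j _ => ?_
    rw [show pi - pj j = -(pj j - pi) by abel, inner_neg_right]
    ring
  rw [h]
  rw [mul_neg, div_mul_cancel₀ _ hden]
  ring
end

section
/- Let p_j lie in a plane H = {x : nᵀx = c} with common unit normal n_j = n for all j, let ω_j ≥ 0 with Σ ω_j > 0, and let μ > -1. Then the H-MLS evaluated point p̂ = [Σ ω_j(I + μ n nᵀ)]⁻¹ Σ ω_j(I + μ n nᵀ)p_j equals the weighted average (Σ ω_j p_j)/(Σ ω_j), and in particular p̂ ∈ H. -/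
open Matrix

theorem stmt17 {ι : Type*} [Fintype ι] (n : Fin 3 → ℝ) (hn : n ⬝ᵥ n = 1)
    (cst : ℝ) (pj : ι → Fin 3 → ℝ) (hpj : ∀ j, n ⬝ᵥ pj j = cst)
    (ω : ι → ℝ) (hω : ∀ j, 0 ≤ ω j) (hωs : 0 < ∑ j, ω j) (μ : ℝ) (hμ : -1 < μ) :
    (∑ j, ω j • ((1 : Matrix (Fin 3) (Fin 3) ℝ) + μ • vecMulVec n n))⁻¹
      *ᵥ (∑ j, ω j • (((1 : Matrix (Fin 3) (Fin 3) ℝ) + μ • vecMulVec n n) *ᵥ pj j))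
    = (∑ j, ω j)⁻¹ • ∑ j, ω j • pj j ∧
    n ⬝ᵥ ((∑ j, ω j • ((1 : Matrix (Fin 3) (Fin 3) ℝ) + μ • vecMulVec n n))⁻¹
      *ᵥ (∑ j, ω j • (((1 : Matrix (Fin 3) (Fin 3) ℝ) + μ • vecMulVec n n) *ᵥ pj j)))
    = cst := by
  set P : Matrix (Fin 3) (Fin 3) ℝ := vecMulVec n n with hP
  set A : Matrix (Fin 3) (Fin 3) ℝ := 1 + μ • P with hA
  set B : Matrix (Fin 3) (Fin 3) ℝ := 1 - (μ / (1 + μ)) • P with hB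
  have hμ0 : (1 : ℝ) + μ ≠ 0 := by linarith
  have hS : (∑ j, ω j) ≠ 0 := ne_of_gt hωs
  have hPP : P * P = P := by
    ext i j
    simp only [hP, Matrix.mul_apply, vecMulVec_apply]
    have : ∑ k, n i * n k * (n k * n j) = (n i * n j) * (n ⬝ᵥ n) := by
      simp only [dotProduct, Finset.mul_sum]
      exact Finset.sum_congr rfl fun k _ => by ring
    rw [this, hn, mul_one]
  have hAB : A * B = 1 := by
    rw [hA, hB]
    simp only [mul_sub, add_mul, one_mul, mul_one, Matrix.smul_mul, Matrix.mul_smul,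
      hPP, smul_smul]
    have h0 : μ • P - ((μ / (1 + μ)) • P + (μ / (1 + μ) * μ) • P) = 0 := by
      rw [← add_smul, ← sub_smul]
      have : μ - (μ / (1 + μ) + μ / (1 + μ) * μ) = 0 := by
        field_simp; ring
      rw [this, zero_smul]
    rw [add_sub_assoc, h0, add_zero]
  have hBA : B * A = 1 := mul_eq_one_comm.mp hAB
  -- the coefficient matrix
  have hsumA : (∑ j, ω j • A) = (∑ j, ω j) • A := by
    rw [Finset.sum_smul]
  have hinv : (∑ j, ω j • A)⁻¹ = (∑ j, ω j)⁻¹ • B := by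
    apply Matrix.inv_eq_right_inv
    rw [hsumA, smul_mul_assoc, Matrix.mul_smul, hAB, smul_smul,
      mul_inv_cancel₀ hS, one_smul]
  set q : Fin 3 → ℝ := ∑ j, ω j • pj j with hq
  have hsumv : (∑ j, ω j • (A *ᵥ pj j)) = A *ᵥ q := by
    rw [hq]
    have h := map_sum (Matrix.mulVecLin A) (fun j => ω j • pj j) Finset.univ
    simp only [Matrix.mulVecLin_apply, Matrix.mulVec_smul] at h
    exact h.symm
  have hmain : (∑ j, ω j • A)⁻¹ *ᵥ (∑ j, ω j • (A *ᵥ pj j)) = (∑ j, ω j)⁻¹ • q := by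
    rw [hinv, hsumv, Matrix.smul_mulVec, Matrix.mulVec_mulVec, hBA, Matrix.one_mulVec]
  refine ⟨hmain, ?_⟩
  rw [hmain, dotProduct_smul]
  have : n ⬝ᵥ q = (∑ j, ω j) * cst := by
    rw [hq, Finset.sum_mul]
    simp only [dotProduct, Finset.sum_apply, Pi.smul_apply, smul_eq_mul, Finset.mul_sum]
    rw [Finset.sum_comm]
    refine Finset.sum_congr rfl fun j _ => ?_
    have hj := hpj j
    simp only [dotProduct] at hj
    calc ∑ x, n x * (ω j * pj j x) = ω j * ∑ x, n x * pj j x := by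
          rw [Finset.mul_sum]; exact Finset.sum_congr rfl fun x _ => by ring
      _ = ω j * cst := by rw [hj]
  rw [this, smul_eq_mul, ← mul_assoc, inv_mul_cancel₀ hS, one_mul]
end
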